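/- arXiv:2206.09374 — 2 statements merged into one kernel-verified Lean document; each statement's English description precedes it below -/
import Mathlib

section
/- Assume in addition that V_1^n = Ṽ_1^{n+1} = 1/‖ 1 ‖ (the normalized constant function on ℝ^d). Define ρ^{n+1} = ‖ 1 ‖ · Σ_k X̃_k^{n+1} S̃^{n+1}_{k1}. Then the discrete mass continuity equation (ρ^{n+1} − ρ^n)/τ + ∇_x · j^n = 0 holds pointwise on Ω_x; in particular ∫_{Ω_x} ρ^{n+1} dx = ∫_{Ω_x} ρ^n dx, i.e. total mass is preserved by one step of the scheme. -/
open MeasureTheory Real Set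

noncomputable section

/-- Partial derivative of `u` in the `i`-th coordinate direction. -/
def pd {d : ℕ} (i : Fin d) (u : (Fin d → ℝ) → ℝ) (x : Fin d → ℝ) : ℝ :=
  fderiv ℝ u x (Pi.single i 1)

/-- Gaussian weight `f_{0v}(v) = exp(-|v|²/2)`. -/
def f0v {d : ℕ} (v : Fin d → ℝ) : ℝ := Real.exp (-(∑ i, v i ^ 2) / 2)

/-- Fundamental domain of the `d`-dimensional torus `Ω_x`. -/
def cube (d : ℕ) : Set (Fin d → ℝ) := Set.univ.pi fun _ => Set.Ioc (0 : ℝ) 1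

/-- `L²(Ω_x)` inner product. -/
def ipx {d : ℕ} (u w : (Fin d → ℝ) → ℝ) : ℝ := ∫ x in cube d, u x * w x

/-- Weighted inner product `⟨u,w⟩_v = ∫ f_{0v} u w dv`. -/
def ipv {d : ℕ} (u w : (Fin d → ℝ) → ℝ) : ℝ := ∫ v, f0v v * u v * w v

/-- Weighted norm `‖w‖ = ⟨w,w⟩_v^{1/2}`. -/
def nv {d : ℕ} (w : (Fin d → ℝ) → ℝ) : ℝ := Real.sqrt (ipv w w)

/-- Periodicity with period 1 in each coordinate (functions on the torus). -/
def Per {d : ℕ} (u : (Fin d → ℝ) → ℝ) : Prop := ∀ x i, u (x + Pi.single i 1) = u x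

/-- All (iterated) derivatives have at most polynomial growth. -/
def PolyAll {d : ℕ} (g : (Fin d → ℝ) → ℝ) : Prop :=
  ∀ n : ℕ, ∃ (C : ℝ) (p : ℕ), ∀ v, ‖iteratedFDeriv ℝ n g v‖ ≤ C * (1 + ‖v‖) ^ p

/-!
Since `Ṽ₁ = V₁` is the normalized constant, orthonormality of the `V_j` gives
`S̃_{k1} = ⟨X̃_k, K₁^{n+1}⟩`, and as `K₁^{n+1}` lies in the span of the orthonormal `X̃_k` this
means `ρ^{n+1} = ‖1‖ K₁^{n+1}`. In the same way `ρ^n = ‖1‖ K₁^n`, so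
`ρ^{n+1} - ρ^n = τ ∫ RHS[f^n] dv`. In this velocity integral the force term is a `v`-derivative of
a Gaussian times a function of temperate growth, which integrates to zero, while the transport term
is `-∇ₓ · j^n`: `f^n` is a finite sum of products `X_i(x) Φ_i(v)`, so differentiating under the
integral sign is linear algebra. Mass is conserved because the derivative of a periodic function
integrates to zero over the torus.
-/

section Gaussian
variable {d : ℕ}

lemma f0v_pos (v : Fin d → ℝ) : 0 < f0v v := Real.exp_pos _

@[fun_prop]
lemma differentiable_f0v : Differentiable ℝ (f0v (d := d)) := by
  unfold f0v
  fun_prop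

@[fun_prop]
lemma continuous_f0v : Continuous (f0v (d := d)) :=
  differentiable_f0v.continuous

lemma sq_norm_le_sum_sq (v : Fin d → ℝ) : ‖v‖ ^ 2 ≤ ∑ i, v i ^ 2 := by
  have h : ‖v‖ ≤ √(∑ i, v i ^ 2) :=
    (pi_norm_le_iff_of_nonneg (Real.sqrt_nonneg _)).2 fun i => by
      rw [Real.norm_eq_abs]
      exact Real.abs_le_sqrt (Finset.single_le_sum (fun j _ => sq_nonneg (v j)) (Finset.mem_univ i))
  calc ‖v‖ ^ 2 ≤ √(∑ i, v i ^ 2) ^ 2 := by gcongr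
    _ = ∑ i, v i ^ 2 := Real.sq_sqrt (Finset.sum_nonneg fun i _ => sq_nonneg _)

lemma one_add_norm_pow_mul_f0v_le (p : ℕ) (v : Fin d → ℝ) :
    (1 + ‖v‖) ^ p * f0v v ≤ Real.exp ((p : ℝ) ^ 2) * ∏ i, Real.exp (-(1 / 4) * v i ^ 2) := by
  have hpow : (1 + ‖v‖) ^ p ≤ Real.exp (p * ‖v‖) := by
    rw [Real.exp_nat_mul]
    gcongr
    linarith [Real.add_one_le_exp ‖v‖]
  rw [← Real.exp_sum, ← Real.exp_add]
  calc (1 + ‖v‖) ^ p * f0v v ≤ Real.exp (p * ‖v‖) * f0v v :=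
        mul_le_mul_of_nonneg_right hpow (f0v_pos v).le
    _ = Real.exp (p * ‖v‖ - (∑ i, v i ^ 2) / 2) := by rw [f0v, ← Real.exp_add]; ring_nf
    _ ≤ _ := by
        refine Real.exp_le_exp.2 ?_
        rw [← Finset.mul_sum]
        nlinarith [sq_norm_le_sum_sq v, sq_nonneg (‖v‖ / 2 - p)]

lemma integrable_one_add_norm_pow_mul_f0v (p : ℕ) :
    Integrable fun v : Fin d → ℝ => (1 + ‖v‖) ^ p * f0v v := by
  refine Integrable.mono' ((Integrable.fintype_prod (f := fun _ t => Real.exp (-(1 / 4) * t ^ 2))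
    fun _ => integrable_exp_neg_mul_sq (by norm_num)).const_mul (Real.exp ((p : ℝ) ^ 2)))
    (by fun_prop) (ae_of_all _ fun v => ?_)
  rw [Real.norm_of_nonneg (by have := f0v_pos v; positivity)]
  exact one_add_norm_pow_mul_f0v_le p v

lemma integrable_f0v_mul {g : (Fin d → ℝ) → ℝ} (hg : g.HasTemperateGrowth) :
    Integrable fun v => f0v v * g v := by
  obtain ⟨k, C, hC⟩ := hg.2 0
  refine Integrable.mono' ((integrable_one_add_norm_pow_mul_f0v k).const_mul C)
    (continuous_f0v.mul hg.1.continuous).aestronglyMeasurable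
    (ae_of_all _ fun v => ?_)
  have hgv : ‖g v‖ ≤ C * (1 + ‖v‖) ^ k := by simpa using hC v
  rw [norm_mul, Real.norm_of_nonneg (f0v_pos v).le]
  calc f0v v * ‖g v‖ ≤ f0v v * (C * (1 + ‖v‖) ^ k) := by gcongr; exact (f0v_pos v).le
    _ = C * ((1 + ‖v‖) ^ k * f0v v) := by ring

lemma integral_f0v_mul_eq {c : ℝ} (hc : c ≠ 0) (w : (Fin d → ℝ) → ℝ) :
    ∫ v, f0v v * w v = c * ipv w fun _ => 1 / c := by
  simp only [ipv, mul_one_div, integral_div]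
  field_simp

lemma nv_one_pos : 0 < nv fun _ : Fin d → ℝ => (1 : ℝ) := by
  have hint : Integrable (f0v (d := d)) := by
    simpa using integrable_f0v_mul (g := fun _ : Fin d → ℝ => (1 : ℝ)) (.const 1)
  refine Real.sqrt_pos.2 ?_
  simp only [ipv, mul_one]
  rw [integral_pos_iff_support_of_nonneg (fun v => (f0v_pos v).le) hint,
    Function.support_eq_univ fun v => (f0v_pos v).ne']
  exact pos_iff_ne_zero.2 (Measure.measure_univ_ne_zero.2 (NeZero.ne _))

lemma hasTemperateGrowth_apply (s : Fin d) : (fun v : Fin d → ℝ => v s).HasTemperateGrowth :=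
  (ContinuousLinearMap.proj (R := ℝ) (φ := fun _ : Fin d => ℝ) s).hasTemperateGrowth

lemma PolyAll.hasTemperateGrowth {g : (Fin d → ℝ) → ℝ} (hp : PolyAll g)
    (hg : ContDiff ℝ (⊤ : ℕ∞) g) : g.HasTemperateGrowth :=
  ⟨hg, fun n => let ⟨C, k, h⟩ := hp n; ⟨k, C, h⟩⟩

lemma hasTemperateGrowth_pd {g : (Fin d → ℝ) → ℝ} (hg : g.HasTemperateGrowth) (s : Fin d) :
    (pd s g).HasTemperateGrowth := by
  have hfderiv : (fderiv ℝ g).HasTemperateGrowth := by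
    refine ⟨hg.1.fderiv_right le_rfl, fun n => ?_⟩
    obtain ⟨k, C, h⟩ := hg.2 (n + 1)
    exact ⟨k, C, fun x => by rw [norm_iteratedFDeriv_fderiv]; exact h x⟩
  exact (ContinuousLinearMap.apply ℝ ℝ (Pi.single s 1)).hasTemperateGrowth.comp hfderiv

lemma pd_f0v (s : Fin d) (v : Fin d → ℝ) : pd s f0v v = -(v s) * f0v v := by
  have hsq (i : Fin d) : fderiv ℝ (fun w : Fin d → ℝ => w i ^ 2) v (Pi.single s 1) =
      2 * v i * Pi.single (M := fun _ => ℝ) s 1 i := by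
    rw [fderiv_fun_pow 2 (by fun_prop)]
    simp [fderiv_apply]
  unfold pd f0v
  simp_rw [div_eq_mul_inv]
  rw [fderiv_exp (by fun_prop), fderiv_mul_const (by fun_prop), fderiv_fun_neg,
    fderiv_fun_sum fun i _ => by fun_prop]
  simp [hsq, Pi.single_apply]
  ring

lemma pd_f0v_mul {g : (Fin d → ℝ) → ℝ} (hg : Differentiable ℝ g) (s : Fin d) (v : Fin d → ℝ) :
    pd s (fun w => f0v w * g w) v = f0v v * (pd s g v - v s * g v) := by
  rw [pd, fderiv_fun_mul (differentiable_f0v v) (hg v)]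
  simp only [add_apply, smul_apply, smul_eq_mul]
  rw [← pd, ← pd, pd_f0v]
  ring

lemma integrable_pd_f0v_mul {g : (Fin d → ℝ) → ℝ} (hg : g.HasTemperateGrowth) (s : Fin d) :
    Integrable (pd s fun w => f0v w * g w) := by
  rw [funext (pd_f0v_mul (hg.1.differentiable (by simp)) s)]
  exact integrable_f0v_mul ((hasTemperateGrowth_pd hg s).fun_sub
    ((hasTemperateGrowth_apply s).fun_mul hg))

lemma integral_pd_f0v_mul {g : (Fin d → ℝ) → ℝ} (hg : g.HasTemperateGrowth) (s : Fin d) :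
    ∫ v, pd s (fun w => f0v w * g w) v = 0 := by
  have hdiff : Differentiable ℝ fun w => f0v w * g w :=
    differentiable_f0v.mul (hg.1.differentiable (by simp))
  have hparts := integral_mul_fderiv_eq_neg_fderiv_mul_of_integrable (μ := volume)
    (f := fun _ => (1 : ℝ)) (g := fun w => f0v w * g w) (v := Pi.single s 1) (by simp)
    (by simp only [one_mul]; exact integrable_pd_f0v_mul hg s)
    (by simpa using integrable_f0v_mul hg) (fun _ _ => differentiableAt_const _)
    (fun w _ => hdiff w)
  simpa [pd] using hparts

end Gaussian

section Calculus
variable {d : ℕ} {ι : Type*} [Fintype ι]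

lemma continuous_pd {u : (Fin d → ℝ) → ℝ} (hu : ContDiff ℝ 1 u) (s : Fin d) :
    Continuous (pd s u) :=
  (hu.continuous_fderiv one_ne_zero).clm_apply continuous_const

lemma pd_sum_mul_const {u : ι → (Fin d → ℝ) → ℝ} {x : Fin d → ℝ}
    (hu : ∀ i, DifferentiableAt ℝ (u i) x) (c : ι → ℝ) (s : Fin d) :
    pd s (fun y => ∑ i, u i y * c i) x = ∑ i, pd s (u i) x * c i := by
  simp [pd, fderiv_fun_sum fun i _ => (hu i).mul_const (c i), fderiv_mul_const (hu _), mul_comm]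

lemma integral_sum_const_mul {α : Type*} [MeasurableSpace α] {μ : Measure α} (a : ι → ℝ)
    {φ : ι → α → ℝ} (hφ : ∀ i, Integrable (φ i) μ) :
    ∫ v, ∑ i, a i * φ i v ∂μ = ∑ i, a i * ∫ v, φ i v ∂μ := by
  rw [integral_finsetSum _ fun i _ => (hφ i).const_mul (a i)]
  simp only [integral_const_mul]

end Calculus

section Torus
variable {d : ℕ}

def divergence (j : (Fin d → ℝ) → Fin d → ℝ) (x : Fin d → ℝ) : ℝ :=
  ∑ s, pd s (fun y => j y s) x

lemma continuous_divergence {j : (Fin d → ℝ) → Fin d → ℝ} (hj : ∀ s, ContDiff ℝ 1 fun y => j y s) :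
    Continuous (divergence j) :=
  continuous_finsetSum _ fun s _ => continuous_pd (hj s) s

lemma integrableOn_cube {f : (Fin d → ℝ) → ℝ} (hf : Continuous f) : IntegrableOn f (cube d) :=
  (hf.continuousOn.integrableOn_compact isCompact_Icc).mono_set fun _ hx =>
    ⟨fun i => (hx i trivial).1.le, fun i => (hx i trivial).2⟩

lemma Per.insertNth_one {n : ℕ} {u : (Fin (n + 1) → ℝ) → ℝ} (hu : Per u) (i : Fin (n + 1))
    (x : Fin n → ℝ) : u (i.insertNth 1 x) = u (i.insertNth 0 x) := by
  have h := Fin.insertNth_sub_same (α := fun _ => ℝ) i 1 0 x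
  rw [sub_zero] at h
  calc u (i.insertNth 1 x) = u (i.insertNth 0 x + Pi.single i 1) := by rw [← h, add_sub_cancel]
    _ = u (i.insertNth 0 x) := hu _ i

lemma integral_cube_pd_eq_zero {u : (Fin d → ℝ) → ℝ} (hu : ContDiff ℝ 1 u) (hper : Per u)
    (s : Fin d) : ∫ x in cube d, pd s u x = 0 := by
  obtain ⟨n, rfl⟩ : ∃ n, d = n + 1 := ⟨d - 1, by have := s.pos; omega⟩
  have hud : Differentiable ℝ u := hu.differentiable one_ne_zero
  -- divergence theorem for the field `u • e_s`; its faces normal to `e_s` cancel by periodicity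
  let F : Fin (n + 1) → (Fin (n + 1) → ℝ) → ℝ := Pi.single s u
  let F' : Fin (n + 1) → (Fin (n + 1) → ℝ) → (Fin (n + 1) → ℝ) →L[ℝ] ℝ :=
    Pi.single s (fderiv ℝ u)
  have hdiv (x : Fin (n + 1) → ℝ) : ∑ i, F' i x (Pi.single i 1) = pd s u x := by
    rw [Finset.sum_eq_single s (fun i _ hi => by simp [F', hi]) (by simp)]
    simp [F', pd]
  have hIcc : cube (n + 1) =ᵐ[volume] Icc 0 1 := by
    rw [cube, volume_pi]
    exact Measure.univ_pi_Ioc_ae_eq_Icc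
  rw [setIntegral_congr_set hIcc, ← funext hdiv,
    integral_divergence_of_hasFDerivAt_off_countable' 0 1 zero_le_one F F' ∅ countable_empty]
  · refine Finset.sum_eq_zero fun i _ => ?_
    rcases eq_or_ne i s with rfl | hi
    · simp [F, hper.insertNth_one]
    · simp [F, hi]
  · intro i
    rcases eq_or_ne i s with rfl | hi
    · simpa [F] using hud.continuous.continuousOn
    · simp only [F, Pi.single_eq_of_ne hi]
      exact continuousOn_const
  · intro x _ i
    rcases eq_or_ne i s with rfl | hi
    · simpa [F, F'] using (hud x).hasFDerivAt
    · simp only [F, F', Pi.single_eq_of_ne hi]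
      exact hasFDerivAt_const (0 : ℝ) x
  · rw [funext hdiv]
    exact (continuous_pd hu s).continuousOn.integrableOn_compact isCompact_Icc

lemma integral_cube_divergence_eq_zero {j : (Fin d → ℝ) → Fin d → ℝ}
    (hj : ∀ s, ContDiff ℝ 1 fun y => j y s) (hper : ∀ s, Per fun y => j y s) :
    ∫ x in cube d, divergence j x = 0 := by
  unfold divergence
  rw [integral_finsetSum _ fun s _ => integrableOn_cube (continuous_pd (hj s) s)]
  exact Finset.sum_eq_zero fun s _ => integral_cube_pd_eq_zero (hj s) (hper s) s

lemma integral_cube_sub_mul_divergence {ρ : (Fin d → ℝ) → ℝ} (hρ : Continuous ρ)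
    {j : (Fin d → ℝ) → Fin d → ℝ} (hj : ∀ s, ContDiff ℝ 1 fun y => j y s)
    (hper : ∀ s, Per fun y => j y s) (τ : ℝ) :
    ∫ x in cube d, (ρ x - τ * divergence j x) = ∫ x in cube d, ρ x := by
  rw [integral_sub (integrableOn_cube hρ)
      ((integrableOn_cube (continuous_divergence hj)).const_mul τ), integral_const_mul,
    integral_cube_divergence_eq_zero hj hper, mul_zero, sub_zero]

end Torus

section LowRank
variable {d r : ℕ}

def lowRank (X : Fin r → (Fin d → ℝ) → ℝ) (S : Fin r → Fin r → ℝ)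
    (V : Fin r → (Fin d → ℝ) → ℝ) (x v : Fin d → ℝ) : ℝ :=
  f0v v * ∑ i, ∑ j, X i x * S i j * V j v

def vlasovRHS (E : (Fin d → ℝ) → Fin d → ℝ) (f : (Fin d → ℝ) → (Fin d → ℝ) → ℝ)
    (x v : Fin d → ℝ) : ℝ :=
  -(∑ s, v s * pd s (fun y => f y v) x) + ∑ s, E x s * pd s (f x) v

def current (f : (Fin d → ℝ) → (Fin d → ℝ) → ℝ) (x : Fin d → ℝ) (s : Fin d) : ℝ :=
  ∫ v, v s * f x v

variable (X : Fin r → (Fin d → ℝ) → ℝ) (S : Fin r → Fin r → ℝ) {V : Fin r → (Fin d → ℝ) → ℝ}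

lemma lowRank_eq_sum_mul (x v : Fin d → ℝ) :
    lowRank X S V x v = ∑ i, X i x * (f0v v * ∑ j, S i j * V j v) := by
  simp only [lowRank, Finset.mul_sum]
  exact Finset.sum_congr rfl fun i _ => Finset.sum_congr rfl fun j _ => by ring

lemma integrable_apply_mul_f0v_mul (hV : ∀ j, (V j).HasTemperateGrowth) (a : Fin r → ℝ)
    (s : Fin d) : Integrable fun v => v s * (f0v v * ∑ j, a j * V j v) := by
  have hcomb : (fun v => ∑ j, a j * V j v).HasTemperateGrowth := by fun_prop
  simpa only [mul_left_comm] using integrable_f0v_mul ((hasTemperateGrowth_apply s).fun_mul hcomb)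

lemma current_lowRank (hV : ∀ j, (V j).HasTemperateGrowth) (x : Fin d → ℝ) (s : Fin d) :
    current (lowRank X S V) x s = ∑ i, X i x * ∫ v, v s * (f0v v * ∑ j, S i j * V j v) := by
  have h (v : Fin d → ℝ) :
      v s * lowRank X S V x v = ∑ i, X i x * (v s * (f0v v * ∑ j, S i j * V j v)) := by
    rw [lowRank_eq_sum_mul, Finset.mul_sum]
    exact Finset.sum_congr rfl fun i _ => mul_left_comm _ _ _
  simp only [current, h]
  exact integral_sum_const_mul _ fun i => integrable_apply_mul_f0v_mul hV (S i) s

lemma contDiff_current_lowRank (hX : ∀ i, ContDiff ℝ 1 (X i))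
    (hV : ∀ j, (V j).HasTemperateGrowth) (s : Fin d) :
    ContDiff ℝ 1 fun y => current (lowRank X S V) y s := by
  simp only [current_lowRank X S hV]
  fun_prop

lemma per_current_lowRank (hX : ∀ i, Per (X i)) (hV : ∀ j, (V j).HasTemperateGrowth)
    (s : Fin d) : Per fun y => current (lowRank X S V) y s := by
  intro x k
  simp only [current_lowRank X S hV, hX _ x k]

lemma apply_mul_pd_lowRank (hX : ∀ i, Differentiable ℝ (X i)) (x v : Fin d → ℝ) (s : Fin d) :
    v s * pd s (fun y => lowRank X S V y v) x =
      ∑ i, pd s (X i) x * (v s * (f0v v * ∑ j, S i j * V j v)) := by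
  simp only [lowRank_eq_sum_mul]
  rw [pd_sum_mul_const (fun i => hX i x), Finset.mul_sum]
  exact Finset.sum_congr rfl fun i _ => mul_left_comm _ _ _

lemma integrable_apply_mul_pd_lowRank (hX : ∀ i, Differentiable ℝ (X i))
    (hV : ∀ j, (V j).HasTemperateGrowth) (x : Fin d → ℝ) (s : Fin d) :
    Integrable fun v => v s * pd s (fun y => lowRank X S V y v) x := by
  simp only [apply_mul_pd_lowRank X S hX]
  exact integrable_finsetSum _ fun i _ => (integrable_apply_mul_f0v_mul hV (S i) s).const_mul _

lemma integral_apply_mul_pd_lowRank (hX : ∀ i, Differentiable ℝ (X i))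
    (hV : ∀ j, (V j).HasTemperateGrowth) (x : Fin d → ℝ) (s : Fin d) :
    ∫ v, v s * pd s (fun y => lowRank X S V y v) x =
      pd s (fun y => current (lowRank X S V) y s) x := by
  simp only [apply_mul_pd_lowRank X S hX, current_lowRank X S hV]
  rw [integral_sum_const_mul _ fun i => integrable_apply_mul_f0v_mul hV (S i) s,
    pd_sum_mul_const fun i => hX i x]

lemma integral_vlasovRHS_lowRank (hX : ∀ i, Differentiable ℝ (X i))
    (hV : ∀ j, (V j).HasTemperateGrowth) (E : (Fin d → ℝ) → Fin d → ℝ) (x : Fin d → ℝ) :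
    ∫ v, vlasovRHS E (lowRank X S V) x v = -divergence (current (lowRank X S V)) x := by
  have hG : (fun v => ∑ i, ∑ j, X i x * S i j * V j v).HasTemperateGrowth := by fun_prop
  have hforce (s : Fin d) : Integrable fun v => E x s * pd s (lowRank X S V x) v :=
    (integrable_pd_f0v_mul hG s).const_mul _
  have hforce_zero (s : Fin d) : ∫ v, pd s (lowRank X S V x) v = 0 := integral_pd_f0v_mul hG s
  have htransport (s : Fin d) := integrable_apply_mul_pd_lowRank X S hX hV x s
  unfold vlasovRHS
  rw [integral_add (integrable_finsetSum _ fun s _ => htransport s).fun_neg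
      (integrable_finsetSum _ fun s _ => hforce s), integral_neg,
    integral_finsetSum _ fun s _ => htransport s, integral_finsetSum _ fun s _ => hforce s]
  simp only [integral_const_mul, hforce_zero, integral_apply_mul_pd_lowRank X S hX hV, mul_zero,
    Finset.sum_const_zero, add_zero, divergence]

lemma integral_lowRank (hV : ∀ j, (V j).HasTemperateGrowth) {z : Fin r} {c : ℝ} (hc : c ≠ 0)
    (hVz : V z = fun _ => 1 / c) (hVon : ∀ j, ipv (V j) (V z) = if j = z then 1 else 0)
    (x : Fin d → ℝ) : ∫ v, lowRank X S V x v = c * ∑ i, X i x * S i z := by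
  have hrow (i : Fin r) : ∫ v, f0v v * ∑ j, S i j * V j v = c * S i z := by
    have h (v : Fin d → ℝ) : f0v v * ∑ j, S i j * V j v = ∑ j, S i j * (f0v v * V j v) := by
      rw [Finset.mul_sum]
      exact Finset.sum_congr rfl fun j _ => mul_left_comm _ _ _
    simp only [h]
    rw [integral_sum_const_mul _ fun j => integrable_f0v_mul (hV j)]
    simp only [integral_f0v_mul_eq hc, ← hVz, hVon, mul_ite, mul_one, mul_zero,
      Finset.sum_ite_eq', Finset.mem_univ, if_true]
    ring
  simp only [lowRank_eq_sum_mul]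
  rw [integral_sum_const_mul _ fun i => integrable_f0v_mul (by fun_prop), Finset.mul_sum]
  simp only [hrow]
  exact Finset.sum_congr rfl fun i _ => by ring

end LowRank

section Projection
variable {d : ℕ}

lemma ipx_sum_mul {ι : Type*} [Fintype ι] {w : (Fin d → ℝ) → ℝ} {u : ι → (Fin d → ℝ) → ℝ}
    (hw : Continuous w) (hu : ∀ l, Continuous (u l)) (a : ι → ℝ) :
    ipx w (fun x => ∑ l, a l * u l x) = ∑ l, a l * ipx w (u l) := by
  have h (x : Fin d → ℝ) : w x * ∑ l, a l * u l x = ∑ l, a l * (w x * u l x) := by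
    rw [Finset.mul_sum]
    exact Finset.sum_congr rfl fun l _ => mul_left_comm _ _ _
  simp only [ipx, h]
  exact integral_sum_const_mul a fun l => integrableOn_cube (hw.mul (hu l))

lemma eq_sum_mul_ipx_of_mem_span {ι : Type*} [Fintype ι] [DecidableEq ι]
    {Xt : ι → (Fin d → ℝ) → ℝ} (hXt : ∀ k, Continuous (Xt k))
    (hon : ∀ k l, ipx (Xt k) (Xt l) = if k = l then 1 else 0)
    {u : (Fin d → ℝ) → ℝ} (hu : u ∈ Submodule.span ℝ (Set.range Xt)) (x : Fin d → ℝ) :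
    u x = ∑ k, Xt k x * ipx (Xt k) u := by
  obtain ⟨a, rfl⟩ := (Submodule.mem_span_range_iff_exists_fun ℝ).1 hu
  have hfun : ∑ l, a l • Xt l = fun y => ∑ l, a l * Xt l y := by
    ext y
    simp
  simp only [hfun, ipx_sum_mul (hXt _) hXt, hon, mul_ite, mul_one, mul_zero, Finset.sum_ite_eq,
    Finset.mem_univ, if_true]
  exact Finset.sum_congr rfl fun k _ => mul_comm _ _

-- With `w = X̃_k`, `V z = Ṽ₁` and `F = RHS[f^n]`, the left side is `⟨X̃_k, K_z^{n+1}⟩` and the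
-- right side is `S̃_{k1}`.
lemma ipx_kStep_eq {r : ℕ} {w : (Fin d → ℝ) → ℝ} {X V : Fin r → (Fin d → ℝ) → ℝ}
    (hw : Continuous w) (hX : ∀ i, Continuous (X i)) (S : Fin r → Fin r → ℝ) (τ : ℝ)
    {z : Fin r} (hVon : ∀ j, ipv (V j) (V z) = if j = z then 1 else 0)
    {F : (Fin d → ℝ) → (Fin d → ℝ) → ℝ} (hF : Continuous fun x => ∫ v, V z v * F x v) :
    ipx w (fun x => (∑ i, X i x * S i z) + τ * ∫ v, V z v * F x v) =
      (∑ i, ∑ j, ipx w (X i) * S i j * ipv (V j) (V z)) +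
        τ * ∫ x in cube d, ∫ v, w x * V z v * F x v := by
  have hcoeff : ∑ i, ∑ j, ipx w (X i) * S i j * ipv (V j) (V z) = ∑ i, S i z * ipx w (X i) := by
    simp only [hVon, mul_ite, mul_one, mul_zero, Finset.sum_ite_eq', Finset.mem_univ, if_true]
    exact Finset.sum_congr rfl fun i _ => mul_comm _ _
  have hinner (x : Fin d → ℝ) : ∫ v, w x * V z v * F x v = w x * ∫ v, V z v * F x v := by
    simp only [mul_assoc, integral_const_mul]
  have hsum : (fun x => ∑ i, X i x * S i z) = fun x => ∑ i, S i z * X i x := by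
    simp only [mul_comm]
  have h₁ : IntegrableOn (fun x => w x * ∑ i, X i x * S i z) (cube d) :=
    integrableOn_cube (by fun_prop)
  have h₂ : IntegrableOn (fun x => τ * (w x * ∫ v, V z v * F x v)) (cube d) :=
    integrableOn_cube (by fun_prop)
  rw [hcoeff, ← ipx_sum_mul hw hX, ← hsum]
  simp only [hinner, ipx, mul_add, mul_left_comm (w _) τ]
  rw [integral_add h₁ h₂, integral_const_mul]

end Projection

theorem discrete_mass_continuity_general
    (d r R R' : ℕ) (hr : 0 < r) (hR' : 0 < R')
    (τ : ℝ) (hτ : 0 < τ)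
    (S : Fin r → Fin r → ℝ)
    (E : (Fin d → ℝ) → Fin d → ℝ)
    (X : Fin r → (Fin d → ℝ) → ℝ)
    (hXsm : ∀ i, ContDiff ℝ (⊤ : ℕ∞) (X i)) (hXper : ∀ i, Per (X i))
    (V : Fin r → (Fin d → ℝ) → ℝ)
    (hVsm : ∀ j, ContDiff ℝ (⊤ : ℕ∞) (V j)) (hVpoly : ∀ j, PolyAll (V j))
    (hVon : ∀ i j, ipv (V i) (V j) = if i = j then (1 : ℝ) else 0)
    (Xt : Fin R → (Fin d → ℝ) → ℝ)
    (hXtsm : ∀ k, ContDiff ℝ (⊤ : ℕ∞) (Xt k))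
    (hXton : ∀ k l, ipx (Xt k) (Xt l) = if k = l then (1 : ℝ) else 0)
    (Vt : Fin R' → (Fin d → ℝ) → ℝ)
    -- the low-rank function f^n and the right-hand side RHS[f^n]
    (fn : (Fin d → ℝ) → (Fin d → ℝ) → ℝ)
    (hfn : fn = fun x v => f0v v * ∑ i, ∑ j, X i x * S i j * V j v)
    (RHS : (Fin d → ℝ) → (Fin d → ℝ) → ℝ)
    (hRHS : RHS = fun x v =>
      -(∑ s, v s * pd s (fun y => fn y v) x) + ∑ s, E x s * pd s (fn x) v)
    -- the K step: K^{n+1}_k = K^n_k + τ ∫ V_k RHS[f^n] dv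
    (K1 : Fin r → (Fin d → ℝ) → ℝ)
    (hK1 : K1 = fun k x => (∑ i, X i x * S i k) + τ * ∫ v, V k v * RHS x v)
    -- the augmented bases contain X_i, ∂_s X_i, K_i^{n+1} and V_j respectively
    (hspanK : ∀ i, K1 i ∈ Submodule.span ℝ (Set.range Xt))
    -- the projection matrices M, N^T and the updated coefficients S̃^{n+1}
    (M : Fin R → Fin r → ℝ) (hM : M = fun k i => ipx (Xt k) (X i))
    (NT : Fin r → Fin R' → ℝ) (hNT : NT = fun j l => ipv (V j) (Vt l))
    (St : Fin R → Fin R' → ℝ)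
    (hSt : St = fun k l => (∑ i, ∑ j, M k i * S i j * NT j l)
      + τ * ∫ x in cube d, ∫ v, Xt k x * Vt l v * RHS x v)
    -- the first velocity basis function is the normalized constant 1/‖1‖
    (hV1 : V ⟨0, hr⟩ = fun _ => 1 / nv fun _ : Fin d → ℝ => (1 : ℝ))
    (hVt1 : Vt ⟨0, hR'⟩ = fun _ => 1 / nv fun _ : Fin d → ℝ => (1 : ℝ))
    -- the moments ρ^n, ρ^{n+1} = ‖1‖ Σ_k X̃_k^{n+1} S̃^{n+1}_{k1}, and j^n
    (ρ ρ' : (Fin d → ℝ) → ℝ) (jn : (Fin d → ℝ) → Fin d → ℝ)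
    (hρ : ρ = fun x => ∫ v, fn x v)
    (hρ' : ρ' = fun x =>
      (nv fun _ : Fin d → ℝ => (1 : ℝ)) * ∑ k, Xt k x * St k ⟨0, hR'⟩)
    (hjn : jn = fun x s => ∫ v, v s * fn x v) :
    (∀ x, (ρ' x - ρ x) / τ + ∑ s, pd s (fun y => jn y s) x = 0) ∧
      (∫ x in cube d, ρ' x) = ∫ x in cube d, ρ x := by
  set z : Fin r := ⟨0, hr⟩
  set c := nv fun _ : Fin d → ℝ => (1 : ℝ)
  have hc : c ≠ 0 := nv_one_pos.ne'
  have hV j : (V j).HasTemperateGrowth := (hVpoly j).hasTemperateGrowth (hVsm j)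
  have hX i : ContDiff ℝ 1 (X i) := (hXsm i).of_le (by simp)
  obtain rfl : fn = lowRank X S V := hfn
  obtain rfl : RHS = vlasovRHS E (lowRank X S V) := hRHS
  obtain rfl : jn = current (lowRank X S V) := hjn
  have hj := contDiff_current_lowRank X S hX hV
  have hG x : ∫ v, V z v * vlasovRHS E (lowRank X S V) x v =
      1 / c * -divergence (current (lowRank X S V)) x := by
    rw [hV1, integral_const_mul,
      integral_vlasovRHS_lowRank X S (fun i => (hX i).differentiable one_ne_zero) hV E]
  have hcoeff k : St k ⟨0, hR'⟩ = ipx (Xt k) (K1 z) := by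
    simp only [hSt, hM, hNT, hK1, hVt1.trans hV1.symm]
    refine (ipx_kStep_eq (hXtsm k).continuous (fun i => (hX i).continuous) S τ (hVon · z) ?_).symm
    have := continuous_divergence hj
    simp only [hG]
    fun_prop
  have hstep x : ρ' x = ρ x - τ * divergence (current (lowRank X S V)) x := by
    simp only [hρ', hρ, hcoeff]
    rw [← eq_sum_mul_ipx_of_mem_span (fun k => (hXtsm k).continuous) hXton (hspanK z)]
    simp only [hK1, hG, integral_lowRank X S hV hc hV1 (hVon · z)]
    field_simp
    ring
  refine ⟨fun x => by rw [hstep, divergence]; field_simp; ring, ?_⟩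
  have hρ_cont : Continuous ρ := by
    simp only [hρ, integral_lowRank X S hV hc hV1 (hVon · z)]
    fun_prop
  rw [funext hstep]
  exact integral_cube_sub_mul_divergence hρ_cont hj (per_current_lowRank X S hXper hV) τ

/-- the discrete mass continuity equation
`(ρ^{n+1} − ρ^n)/τ + ∇_x · j^n = 0` holds pointwise, and total mass is preserved. -/
theorem discrete_mass_continuity
    (d r R R' : ℕ) (hd : 0 < d) (hr : 0 < r) (hR' : 0 < R')
    (τ : ℝ) (hτ : 0 < τ)
    (S : Fin r → Fin r → ℝ)
    (E : (Fin d → ℝ) → Fin d → ℝ)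
    (hEsm : ∀ s, ContDiff ℝ (⊤ : ℕ∞) fun x => E x s)
    (hEper : ∀ s, Per fun x => E x s)
    (X : Fin r → (Fin d → ℝ) → ℝ)
    (hXsm : ∀ i, ContDiff ℝ (⊤ : ℕ∞) (X i)) (hXper : ∀ i, Per (X i))
    (hXon : ∀ i j, ipx (X i) (X j) = if i = j then (1 : ℝ) else 0)
    (V : Fin r → (Fin d → ℝ) → ℝ)
    (hVsm : ∀ j, ContDiff ℝ (⊤ : ℕ∞) (V j)) (hVpoly : ∀ j, PolyAll (V j))
    (hVon : ∀ i j, ipv (V i) (V j) = if i = j then (1 : ℝ) else 0)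
    (Xt : Fin R → (Fin d → ℝ) → ℝ)
    (hXtsm : ∀ k, ContDiff ℝ (⊤ : ℕ∞) (Xt k)) (hXtper : ∀ k, Per (Xt k))
    (hXton : ∀ k l, ipx (Xt k) (Xt l) = if k = l then (1 : ℝ) else 0)
    (Vt : Fin R' → (Fin d → ℝ) → ℝ)
    (hVtsm : ∀ l, ContDiff ℝ (⊤ : ℕ∞) (Vt l)) (hVtpoly : ∀ l, PolyAll (Vt l))
    (hVton : ∀ k l, ipv (Vt k) (Vt l) = if k = l then (1 : ℝ) else 0)
    -- the low-rank function f^n and the right-hand side RHS[f^n]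
    (fn : (Fin d → ℝ) → (Fin d → ℝ) → ℝ)
    (hfn : fn = fun x v => f0v v * ∑ i, ∑ j, X i x * S i j * V j v)
    (RHS : (Fin d → ℝ) → (Fin d → ℝ) → ℝ)
    (hRHS : RHS = fun x v =>
      -(∑ s, v s * pd s (fun y => fn y v) x) + ∑ s, E x s * pd s (fn x) v)
    -- the K step: K^{n+1}_k = K^n_k + τ ∫ V_k RHS[f^n] dv
    (K1 : Fin r → (Fin d → ℝ) → ℝ)
    (hK1 : K1 = fun k x => (∑ i, X i x * S i k) + τ * ∫ v, V k v * RHS x v)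
    -- the augmented bases contain X_i, ∂_s X_i, K_i^{n+1} and V_j respectively
    (hspanX : ∀ i, X i ∈ Submodule.span ℝ (Set.range Xt))
    (hspanDX : ∀ i s, pd s (X i) ∈ Submodule.span ℝ (Set.range Xt))
    (hspanK : ∀ i, K1 i ∈ Submodule.span ℝ (Set.range Xt))
    (hspanV : ∀ j, V j ∈ Submodule.span ℝ (Set.range Vt))
    -- the projection matrices M, N^T and the updated coefficients S̃^{n+1}
    (M : Fin R → Fin r → ℝ) (hM : M = fun k i => ipx (Xt k) (X i))
    (NT : Fin r → Fin R' → ℝ) (hNT : NT = fun j l => ipv (V j) (Vt l))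
    (St : Fin R → Fin R' → ℝ)
    (hSt : St = fun k l => (∑ i, ∑ j, M k i * S i j * NT j l)
      + τ * ∫ x in cube d, ∫ v, Xt k x * Vt l v * RHS x v)
    -- the first velocity basis function is the normalized constant 1/‖1‖
    (hV1 : V ⟨0, hr⟩ = fun _ => 1 / nv fun _ : Fin d → ℝ => (1 : ℝ))
    (hVt1 : Vt ⟨0, hR'⟩ = fun _ => 1 / nv fun _ : Fin d → ℝ => (1 : ℝ))
    -- the moments ρ^n, ρ^{n+1} = ‖1‖ Σ_k X̃_k^{n+1} S̃^{n+1}_{k1}, and j^n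
    (ρ ρ' : (Fin d → ℝ) → ℝ) (jn : (Fin d → ℝ) → Fin d → ℝ)
    (hρ : ρ = fun x => ∫ v, fn x v)
    (hρ' : ρ' = fun x =>
      (nv fun _ : Fin d → ℝ => (1 : ℝ)) * ∑ k, Xt k x * St k ⟨0, hR'⟩)
    (hjn : jn = fun x s => ∫ v, v s * fn x v) :
    (∀ x, (ρ' x - ρ x) / τ + ∑ s, pd s (fun y => jn y s) x = 0) ∧
      (∫ x in cube d, ρ' x) = ∫ x in cube d, ρ x :=
  discrete_mass_continuity_general d r R R' hr hR' τ hτ S E X hXsm hXper V hVsm hVpoly hVon Xt hXtsm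
    hXton Vt fn hfn RHS hRHS K1 hK1 hspanK M hM NT hNT St hSt hV1 hVt1 ρ ρ' jn hρ hρ' hjn
end
end

section
/- For every index a with 1 ≤ a ≤ m, the a-th column of X^{n+1} S^{n+1} equals the a-th column of K̃, i.e. Σ_i X^{n+1}_{· i} S^{n+1}_{i a} = K̃_{· a}. Consequently, since the columns of V^{n+1} = [U W^{n+1}] are orthonormal with U its first m columns, the truncated approximation f^{n+1} = X^{n+1} S^{n+1} (V^{n+1})^T satisfies f^{n+1} (V^{n+1})’s weighted pairing with U_a exactly: the projection of f^{n+1} onto each fixed basis vector U_a is unchanged by the truncation (⟨U_a, f^{n+1}⟩_v = K̃_{· a}). -/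
open Matrix

noncomputable section

/-!
Both claims come from writing the new factors as products with block-diagonal matrices.
Since `[X^cons X^rem] = X^{n+1} R`, we get `X^{n+1} S^{n+1} = [X^cons S^cons  X^rem Ŝ]`,
whose first `m` columns are `X^cons S^cons = K̃^cons`: truncation only touches the remainder
block. Likewise `V^{n+1} = Ṽ^{n+1} · blockdiag(1, Ŵ)` is a product of matrices with orthonormal
columns, so `(V^{n+1})ᵀ V^{n+1} = 1` and multiplying by it changes nothing.
-/

namespace Matrix

variable {R m n₁ n₂ p₁ p₂ : Type*}

theorem fromCols_mul_fromBlocks_zero [Semiring R] [Fintype n₁] [Fintype n₂]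
    (A₁ : Matrix m n₁ R) (A₂ : Matrix m n₂ R) (B₁ : Matrix n₁ p₁ R) (B₂ : Matrix n₂ p₂ R) :
    fromCols A₁ A₂ * fromBlocks B₁ 0 0 B₂ = fromCols (A₁ * B₁) (A₂ * B₂) := by
  simp [fromCols_mul_fromBlocks]

theorem transpose_mul_self_mul_eq_one [CommSemiring R] [Fintype m] [Fintype n₁]
    [DecidableEq n₁] [DecidableEq p₁] {X : Matrix m n₁ R} {M : Matrix n₁ p₁ R}
    (hX : Xᵀ * X = 1) (hM : Mᵀ * M = 1) : (X * M)ᵀ * (X * M) = 1 := by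
  rw [transpose_mul, Matrix.mul_assoc, ← Matrix.mul_assoc Xᵀ, hX, Matrix.one_mul, hM]

theorem transpose_fromBlocks_one_mul_self_eq_one [Semiring R] [Fintype n₁] [Fintype n₂]
    [DecidableEq n₁] [DecidableEq p₂] {B : Matrix n₂ p₂ R} (hB : Bᵀ * B = 1) :
    (fromBlocks (1 : Matrix n₁ n₁ R) 0 0 B)ᵀ * fromBlocks (1 : Matrix n₁ n₁ R) 0 0 B = 1 := by
  rw [fromBlocks_transpose, fromBlocks_multiply, hB]
  simp

theorem transpose_fromCols_mul_fromCols_mul_eq_one [CommSemiring R] [Fintype m] [Fintype n₁]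
    [Fintype n₂] [DecidableEq n₁] [DecidableEq n₂] [DecidableEq p₂]
    {U : Matrix m n₁ R} {W : Matrix m n₂ R} {B : Matrix n₂ p₂ R}
    (hUW : (fromCols U W)ᵀ * fromCols U W = 1) (hB : Bᵀ * B = 1) :
    (fromCols U (W * B))ᵀ * fromCols U (W * B) = 1 := by
  have hfactor : fromCols U (W * B) = fromCols U W * fromBlocks (1 : Matrix n₁ n₁ R) 0 0 B := by
    rw [fromCols_mul_fromBlocks_zero, Matrix.mul_one]
  rw [hfactor]
  exact transpose_mul_self_mul_eq_one hUW (transpose_fromBlocks_one_mul_self_eq_one hB)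

end Matrix

/-- The `r = m + q` retained columns (and the `R' = m + q'` pre-truncation columns) are indexed
by `Fin m ⊕ Fin q` (resp. `Fin m ⊕ Fin q'`), the `m` conserved columns by `Sum.inl`. -/
theorem conservative_truncation_general
    (nx nv m q q' : ℕ)
    -- the augmented factors X̃, S̃ and K̃ = X̃ S̃
    (Kt : Matrix (Fin nx) (Fin m ⊕ Fin q') ℝ)
    -- QR decomposition K̃^{cons} = X^{cons} S^{cons} (orthonormal columns)
    (Xcons : Matrix (Fin nx) (Fin m) ℝ) (Scons : Matrix (Fin m) (Fin m) ℝ)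
    (hcons : Kt.submatrix id Sum.inl = Xcons * Scons)
    -- rank-(r−m) truncated SVD  S̃^{rem} ≈ Û Ŝ Ŵᵀ of S̃^{rem}, keeping the q = r − m
    -- largest singular values (Û, Ŵ orthonormal columns, Ŝ diagonal nonnegative)
    (Sh : Fin q → ℝ) (Wh : Matrix (Fin q') (Fin q) ℝ)
    (hWh : Whᵀ * Wh = 1)
    -- X^{rem} = X̃^{rem} Û, S^{rem} = Ŝ, and QR decomposition [X^{cons} X^{rem}] = X^{n+1} R
    (Xrem : Matrix (Fin nx) (Fin q) ℝ)
    (Xn1 : Matrix (Fin nx) (Fin m ⊕ Fin q) ℝ) (Rm : Matrix (Fin m ⊕ Fin q) (Fin m ⊕ Fin q) ℝ)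
    (hQR : fromCols Xcons Xrem = Xn1 * Rm)
    -- S^{n+1} = R · blockdiag(S^{cons}, S^{rem})
    (Sn1 : Matrix (Fin m ⊕ Fin q) (Fin m ⊕ Fin q) ℝ)
    (hSn1 : Sn1 = Rm * fromBlocks Scons 0 0 (diagonal Sh))
    -- Ṽ^{n+1} = [U W̃^{n+1}] with orthonormal columns, W^{n+1} = W̃^{n+1} Ŵ,
    -- V^{n+1} = [U W^{n+1}]
    (U : Matrix (Fin nv) (Fin m) ℝ) (Wt : Matrix (Fin nv) (Fin q') ℝ)
    (hVt : (fromCols U Wt)ᵀ * fromCols U Wt = 1)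
    (Vn1 : Matrix (Fin nv) (Fin m ⊕ Fin q) ℝ) (hVn1 : Vn1 = fromCols U (Wt * Wh)) :
    (∀ a : Fin m, ∀ x, (Xn1 * Sn1) x (Sum.inl a) = Kt x (Sum.inl a)) ∧
      ∀ a : Fin m, ∀ x, (Xn1 * Sn1 * Vn1ᵀ * Vn1) x (Sum.inl a) = Kt x (Sum.inl a) := by
  have hXS : Xn1 * Sn1 = fromCols (Xcons * Scons) (Xrem * diagonal Sh) := by
    rw [hSn1, ← Matrix.mul_assoc, ← hQR, fromCols_mul_fromBlocks_zero]
  have hcols : ∀ a : Fin m, ∀ x, (Xn1 * Sn1) x (Sum.inl a) = Kt x (Sum.inl a) := by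
    intro a x
    rw [hXS, fromCols_apply_inl, ← hcons, submatrix_apply, id]
  have hVn1_orth : Vn1ᵀ * Vn1 = 1 := hVn1 ▸ transpose_fromCols_mul_fromCols_mul_eq_one hVt hWh
  refine ⟨hcols, fun a x => ?_⟩
  rw [Matrix.mul_assoc, hVn1_orth, Matrix.mul_one, hcols]

/-- in the conservative truncation step, for every `a ≤ m` the `a`-th
column of `X^{n+1} S^{n+1}` equals the `a`-th column of `K̃`; consequently, since the
columns of `V^{n+1} = [U W^{n+1}]` are orthonormal, the weighted pairing of the truncated
approximation `f^{n+1} = X^{n+1} S^{n+1} (V^{n+1})ᵀ` with each fixed basis vector `U_a`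
is exactly the `a`-th column of `K̃`.  Here the `r = m + q` retained columns (and the
`R' = m + q'` pre-truncation columns) are indexed by `Fin m ⊕ Fin q` (resp. `Fin m ⊕ Fin q'`),
with the first `m` (conserved) columns indexed by `Sum.inl`. -/
theorem conservative_truncation
    (nx nv R m q q' : ℕ)
    (hnx : 0 < nx) (hnv : 0 < nv) (hR : 0 < R) (hm : 0 < m) (hqq : q ≤ q')
    -- the augmented factors X̃, S̃ and K̃ = X̃ S̃
    (Xt : Matrix (Fin nx) (Fin R) ℝ) (St : Matrix (Fin R) (Fin m ⊕ Fin q') ℝ)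
    (Kt : Matrix (Fin nx) (Fin m ⊕ Fin q') ℝ) (hKt : Kt = Xt * St)
    -- QR decomposition K̃^{cons} = X^{cons} S^{cons} (orthonormal columns)
    (Xcons : Matrix (Fin nx) (Fin m) ℝ) (Scons : Matrix (Fin m) (Fin m) ℝ)
    (hcons : Kt.submatrix id Sum.inl = Xcons * Scons)
    (hXcons : Xconsᵀ * Xcons = 1)
    -- QR decomposition K̃^{rem} = X̃^{rem} S̃^{rem} (orthonormal columns)
    (Xtrem : Matrix (Fin nx) (Fin q') ℝ) (Strem : Matrix (Fin q') (Fin q') ℝ)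
    (hrem : Kt.submatrix id Sum.inr = Xtrem * Strem)
    (hXtrem : Xtremᵀ * Xtrem = 1)
    -- rank-(r−m) truncated SVD  S̃^{rem} ≈ Û Ŝ Ŵᵀ of S̃^{rem}, keeping the q = r − m
    -- largest singular values (Û, Ŵ orthonormal columns, Ŝ diagonal nonnegative)
    (Uh : Matrix (Fin q') (Fin q) ℝ) (Sh : Fin q → ℝ) (Wh : Matrix (Fin q') (Fin q) ℝ)
    (hUh : Uhᵀ * Uh = 1) (hWh : Whᵀ * Wh = 1) (hSh : ∀ i, 0 ≤ Sh i)
    -- X^{rem} = X̃^{rem} Û, S^{rem} = Ŝ, and QR decomposition [X^{cons} X^{rem}] = X^{n+1} R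
    (Xrem : Matrix (Fin nx) (Fin q) ℝ) (hXrem : Xrem = Xtrem * Uh)
    (Xn1 : Matrix (Fin nx) (Fin m ⊕ Fin q) ℝ) (Rm : Matrix (Fin m ⊕ Fin q) (Fin m ⊕ Fin q) ℝ)
    (hQR : fromCols Xcons Xrem = Xn1 * Rm)
    (hXn1 : Xn1ᵀ * Xn1 = 1)
    -- S^{n+1} = R · blockdiag(S^{cons}, S^{rem})
    (Sn1 : Matrix (Fin m ⊕ Fin q) (Fin m ⊕ Fin q) ℝ)
    (hSn1 : Sn1 = Rm * fromBlocks Scons 0 0 (diagonal Sh))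
    -- Ṽ^{n+1} = [U W̃^{n+1}] with orthonormal columns, W^{n+1} = W̃^{n+1} Ŵ,
    -- V^{n+1} = [U W^{n+1}]
    (U : Matrix (Fin nv) (Fin m) ℝ) (Wt : Matrix (Fin nv) (Fin q') ℝ)
    (hVt : (fromCols U Wt)ᵀ * fromCols U Wt = 1)
    (Vn1 : Matrix (Fin nv) (Fin m ⊕ Fin q) ℝ) (hVn1 : Vn1 = fromCols U (Wt * Wh)) :
    (∀ a : Fin m, ∀ x, (Xn1 * Sn1) x (Sum.inl a) = Kt x (Sum.inl a)) ∧
      ∀ a : Fin m, ∀ x, (Xn1 * Sn1 * Vn1ᵀ * Vn1) x (Sum.inl a) = Kt x (Sum.inl a) :=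
  conservative_truncation_general nx nv m q q' Kt Xcons Scons hcons Sh Wh hWh Xrem Xn1 Rm hQR Sn1
    hSn1 U Wt hVt Vn1 hVn1
end
end
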